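/- Let f : Finset (Fin n) → Finset (Fin n) be monotone and inflationary, and define the hidden-pattern operator H s = f^[n] s. Then H is a closure operator: H is monotone (s ⊆ t implies H s ⊆ H t), inflationary (s ⊆ H s), and idempotent (H (H s) = H s). -/
import Mathlib

theorem hidden_pattern_closure_operator (n : ℕ) (f : Finset (Fin n) → Finset (Fin n))
    (hmono : ∀ s t, s ⊆ t → f s ⊆ f t) (hinfl : ∀ s, s ⊆ f s)
    (H : Finset (Fin n) → Finset (Fin n)) (hH : ∀ s, H s = f^[n] s) :
    (∀ s t, s ⊆ t → H s ⊆ H t) ∧ (∀ s, s ⊆ H s) ∧ (∀ s, H (H s) = H s) := by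
  have itmono : ∀ k s t, s ⊆ t → f^[k] s ⊆ f^[k] t := by
    intro k
    induction k with
    | zero => intro s t h; simpa using h
    | succ k ih =>
      intro s t h
      rw [Function.iterate_succ_apply', Function.iterate_succ_apply']
      exact hmono _ _ (ih s t h)
  have itinfl : ∀ k s, s ⊆ f^[k] s := by
    intro k
    induction k with
    | zero => intro s; simp
    | succ k ih =>
      intro s
      rw [Function.iterate_succ_apply']
      exact (ih s).trans (hinfl _)
  have key : ∀ s, f (f^[n] s) = f^[n] s := by
    intro s
    have P : ∀ k, f (f^[k] s) = f^[k] s ∨ k ≤ (f^[k] s).card := by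
      intro k
      induction k with
      | zero => right; simp
      | succ k ih =>
        rcases ih with h | h
        · left; rw [Function.iterate_succ_apply', h, h]
        · by_cases hf : f (f^[k] s) = f^[k] s
          · left; rw [Function.iterate_succ_apply', hf, hf]
          · right
            have hss : f^[k] s ⊂ f (f^[k] s) := (hinfl _).ssubset_of_ne (Ne.symm hf)
            have hc := Finset.card_lt_card hss
            rw [Function.iterate_succ_apply']
            omega
    rcases P n with h | h
    · exact h
    · have hle : (f^[n] s).card ≤ n := by
        simpa using Finset.card_le_univ (f^[n] s)
      have huniv : f^[n] s = Finset.univ :=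
        Finset.eq_univ_of_card _ (by simpa using le_antisymm hle h)
      rw [huniv]
      exact subset_antisymm (Finset.subset_univ _) (hinfl _)
  refine ⟨?_, ?_, ?_⟩
  · intro s t h; rw [hH, hH]; exact itmono n s t h
  · intro s; rw [hH]; exact itinfl n s
  · intro s
    rw [hH, hH]
    exact Function.iterate_fixed (key s) n
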